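/- For fixed s^k, the surrogate Q(λ; s^k, λ^k) is strictly convex in λ on (0,∞)^J: its Hessian is diagonal with j-th entry Σ_{i,t} m_{it}·a_{ijt}·λ^k_j / (λ_j²·Σ_l a_{ilt}λ^k_l) > 0 whenever for each j some a_{ijt} > 0, and its unconstrained minimizer is given by λ_j^{k+1} = (λ_j^k / Σ_{i,t} a_{ijt}·exp(-s_i^k)) · Σ_{i,t} a_{ijt}·m_{it} / (Σ_l a_{ilt}λ_l^k). -/

import Mathlib

lemma aux_logmin {A B x : ℝ} (hA : 0 < A) (hB : 0 < B) (hx : 0 < x) :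
    A * (B / A) - B * Real.log (B / A) ≤ A * x - B * Real.log x := by
  have hd : 0 < B / A := div_pos hB hA
  have h1 : Real.log (x / (B / A)) ≤ x / (B / A) - 1 :=
    Real.log_le_sub_one_of_pos (div_pos hx hd)
  rw [Real.log_div hx.ne' hd.ne'] at h1
  have h2 : x / (B / A) = A * x / B := by field_simp
  rw [h2] at h1
  have h3 : B * (A * x / B) = A * x := by field_simp
  have h4 : A * (B / A) = B := by field_simp
  nlinarith [mul_le_mul_of_nonneg_left h1 hB.le]

lemma aux_convex_le {A B u v c d : ℝ} (hB : 0 < B) (hu : 0 < u) (hv : 0 < v)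
    (hc : 0 ≤ c) (hd : 0 ≤ d) (hcd : c + d = 1) :
    A * (c * u + d * v) - B * Real.log (c * u + d * v) ≤
      c * (A * u - B * Real.log u) + d * (A * v - B * Real.log v) := by
  have hlog : c * Real.log u + d * Real.log v ≤ Real.log (c * u + d * v) := by
    have := strictConcaveOn_log_Ioi.concaveOn.2 (Set.mem_Ioi.2 hu) (Set.mem_Ioi.2 hv) hc hd hcd
    simpa [smul_eq_mul] using this
  nlinarith [mul_le_mul_of_nonneg_left hlog hB.le]

lemma aux_convex_lt {A B u v c d : ℝ} (hB : 0 < B) (hu : 0 < u) (hv : 0 < v)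
    (huv : u ≠ v) (hc : 0 < c) (hd : 0 < d) (hcd : c + d = 1) :
    A * (c * u + d * v) - B * Real.log (c * u + d * v) <
      c * (A * u - B * Real.log u) + d * (A * v - B * Real.log v) := by
  have hlog : c * Real.log u + d * Real.log v < Real.log (c * u + d * v) := by
    have := strictConcaveOn_log_Ioi.2 (Set.mem_Ioi.2 hu) (Set.mem_Ioi.2 hv) huv hc hd hcd
    simpa [smul_eq_mul] using this
  nlinarith [mul_lt_mul_of_pos_left hlog hB]

lemma aux_sum_strictConvex {J : ℕ} (A B : Fin J → ℝ) (hB : ∀ j, 0 < B j) (C : ℝ) :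
    StrictConvexOn ℝ {lam : Fin J → ℝ | ∀ j, 0 < lam j}
      (fun lam => (∑ j, (A j * lam j - B j * Real.log (lam j))) + C) := by
  have hconv : Convex ℝ {lam : Fin J → ℝ | ∀ j, 0 < lam j} := by
    intro x hx y hy c d hc hd hcd j
    have := (convex_Ioi (0:ℝ)) (Set.mem_Ioi.2 (hx j)) (Set.mem_Ioi.2 (hy j)) hc hd hcd
    simpa using this
  refine ⟨hconv, ?_⟩
  intro x hx y hy hxy c d hc hd hcd
  obtain ⟨j0, hj0⟩ : ∃ j0, x j0 ≠ y j0 := by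
    by_contra h; push_neg at h; exact hxy (funext h)
  have key : ∑ j, (A j * ((c • x + d • y) j) - B j * Real.log ((c • x + d • y) j)) <
      ∑ j, (c * (A j * x j - B j * Real.log (x j)) + d * (A j * y j - B j * Real.log (y j))) := by
    apply Finset.sum_lt_sum
    · intro j _
      have hz : (c • x + d • y) j = c * x j + d * y j := by simp
      rw [hz]
      exact aux_convex_le (hB j) (hx j) (hy j) hc.le hd.le hcd
    · refine ⟨j0, Finset.mem_univ _, ?_⟩
      have hz : (c • x + d • y) j0 = c * x j0 + d * y j0 := by simp
      rw [hz]
      exact aux_convex_lt (hB j0) (hx j0) (hy j0) hj0 hc hd hcd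
  rw [Finset.sum_add_distrib, ← Finset.mul_sum, ← Finset.mul_sum] at key
  simp only [smul_eq_mul]
  have hC : c * ((∑ j, (A j * x j - B j * Real.log (x j))) + C)
      + d * ((∑ j, (A j * y j - B j * Real.log (y j))) + C)
      = c * (∑ j, (A j * x j - B j * Real.log (x j)))
        + d * (∑ j, (A j * y j - B j * Real.log (y j))) + C := by
    linear_combination C * hcd
  rw [hC]
  linarith [key]

theorem surrogate_strictConvex_and_minimizer (I J T : ℕ)
    (a : Fin I → Fin J → Fin T → ℝ) (m : Fin I → Fin T → ℝ)
    (ha : ∀ i j t, 0 ≤ a i j t) (hm : ∀ i t, 0 < m i t)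
    (sk : Fin I → ℝ) (lamk : Fin J → ℝ)
    (hlamk : ∀ j, 0 < lamk j)
    (hsum : ∀ i t, 0 < ∑ l, a i l t * lamk l)
    (hj : ∀ j, ∃ i t, 0 < a i j t)
    (hden : ∀ j, 0 < ∑ i, ∑ t, a i j t * Real.exp (-(sk i)))
    (Q : (Fin J → ℝ) → ℝ)
    (hQdef : Q = fun lam => ∑ i, ∑ t, (Real.exp (-(sk i)) * ∑ j, a i j t * lam j
        - m i t * ∑ j, (a i j t * lamk j / ∑ l, a i l t * lamk l) *
            Real.log ((∑ l, a i l t * lamk l) / lamk j * lam j)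
        + m i t * sk i))
    (lamnext : Fin J → ℝ)
    (hnext : lamnext = fun j => lamk j / (∑ i, ∑ t, a i j t * Real.exp (-(sk i))) *
        ∑ i, ∑ t, a i j t * m i t / ∑ l, a i l t * lamk l) :
    StrictConvexOn ℝ {lam : Fin J → ℝ | ∀ j, 0 < lam j} Q ∧
    (∀ lam : Fin J → ℝ, (∀ j, 0 < lam j) → ∀ j,
        0 < ∑ i, ∑ t, m i t * a i j t * lamk j / ((lam j) ^ 2 * ∑ l, a i l t * lamk l)) ∧
    (∀ j, 0 < lamnext j) ∧
    ∀ lam : Fin J → ℝ, (∀ j, 0 < lam j) → Q lamnext ≤ Q lam := by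
  set A : Fin J → ℝ := fun j => ∑ i, ∑ t, a i j t * Real.exp (-(sk i)) with hA
  set B : Fin J → ℝ := fun j => ∑ i, ∑ t, m i t * (a i j t * lamk j / ∑ l, a i l t * lamk l) with hB
  set C : ℝ := ∑ i, ∑ t, (m i t * sk i - ∑ j, m i t * ((a i j t * lamk j / ∑ l, a i l t * lamk l) *
      Real.log ((∑ l, a i l t * lamk l) / lamk j))) with hC
  have hApos : ∀ j, 0 < A j := hden
  have hBpos : ∀ j, 0 < B j := by
    intro j
    obtain ⟨i0, t0, h0⟩ := hj j
    apply Finset.sum_pos'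
    · intro i _
      apply Finset.sum_nonneg
      intro t _
      exact mul_nonneg (hm i t).le
        (div_nonneg (mul_nonneg (ha i j t) (hlamk j).le) (hsum i t).le)
    · refine ⟨i0, Finset.mem_univ _, Finset.sum_pos' ?_ ⟨t0, Finset.mem_univ _, ?_⟩⟩
      · intro t _
        exact mul_nonneg (hm i0 t).le
          (div_nonneg (mul_nonneg (ha i0 j t) (hlamk j).le) (hsum i0 t).le)
      · exact mul_pos (hm i0 t0) (div_pos (mul_pos h0 (hlamk j)) (hsum i0 t0))
  have hEq : ∀ lam : Fin J → ℝ, (∀ j, 0 < lam j) →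
      Q lam = (∑ j, (A j * lam j - B j * Real.log (lam j))) + C := by
    intro lam hlam
    have hterm : ∀ i t,
        (Real.exp (-(sk i)) * ∑ j, a i j t * lam j
          - m i t * ∑ j, (a i j t * lamk j / ∑ l, a i l t * lamk l) *
              Real.log ((∑ l, a i l t * lamk l) / lamk j * lam j)
          + m i t * sk i)
        = (∑ j, Real.exp (-(sk i)) * (a i j t * lam j))
          - (∑ j, m i t * ((a i j t * lamk j / ∑ l, a i l t * lamk l) * Real.log (lam j)))
          + (m i t * sk i - ∑ j, m i t * ((a i j t * lamk j / ∑ l, a i l t * lamk l) *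
              Real.log ((∑ l, a i l t * lamk l) / lamk j))) := by
      intro i t
      have hsplit : ∀ j : Fin J,
          Real.log ((∑ l, a i l t * lamk l) / lamk j * lam j)
            = Real.log ((∑ l, a i l t * lamk l) / lamk j) + Real.log (lam j) := fun j =>
        Real.log_mul (div_pos (hsum i t) (hlamk j)).ne' (hlam j).ne'
      simp only [hsplit, mul_add, Finset.sum_add_distrib, Finset.mul_sum]
      ring
    have h1 : ∑ i, ∑ t, ∑ j, Real.exp (-(sk i)) * (a i j t * lam j) = ∑ j, A j * lam j := by
      rw [show (∑ i, ∑ t, ∑ j, Real.exp (-(sk i)) * (a i j t * lam j))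
          = ∑ j, ∑ i, ∑ t, Real.exp (-(sk i)) * (a i j t * lam j) from
        (Finset.sum_congr rfl fun i _ => Finset.sum_comm).trans Finset.sum_comm]
      refine Finset.sum_congr rfl fun j _ => ?_
      rw [hA]
      simp only [Finset.sum_mul]
      exact Finset.sum_congr rfl fun i _ => Finset.sum_congr rfl fun t _ => by ring
    have h2 : ∑ i, ∑ t, ∑ j, m i t * ((a i j t * lamk j / ∑ l, a i l t * lamk l) * Real.log (lam j))
        = ∑ j, B j * Real.log (lam j) := by
      rw [show (∑ i, ∑ t, ∑ j, m i t * ((a i j t * lamk j / ∑ l, a i l t * lamk l) * Real.log (lam j)))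
          = ∑ j, ∑ i, ∑ t, m i t * ((a i j t * lamk j / ∑ l, a i l t * lamk l) * Real.log (lam j)) from
        (Finset.sum_congr rfl fun i _ => Finset.sum_comm).trans Finset.sum_comm]
      refine Finset.sum_congr rfl fun j _ => ?_
      rw [hB]
      simp only [Finset.sum_mul]
      exact Finset.sum_congr rfl fun i _ => Finset.sum_congr rfl fun t _ => by ring
    calc Q lam = ∑ i, ∑ t,
          ((∑ j, Real.exp (-(sk i)) * (a i j t * lam j))
          - (∑ j, m i t * ((a i j t * lamk j / ∑ l, a i l t * lamk l) * Real.log (lam j)))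
          + (m i t * sk i - ∑ j, m i t * ((a i j t * lamk j / ∑ l, a i l t * lamk l) *
              Real.log ((∑ l, a i l t * lamk l) / lamk j)))) := by simp only [hQdef]; exact Finset.sum_congr rfl fun i _ => Finset.sum_congr rfl fun t _ => hterm i t
      _ = (∑ i, ∑ t, ∑ j, Real.exp (-(sk i)) * (a i j t * lam j))
          - (∑ i, ∑ t, ∑ j, m i t * ((a i j t * lamk j / ∑ l, a i l t * lamk l) * Real.log (lam j)))
          + C := by simp only [hC, Finset.sum_add_distrib, Finset.sum_sub_distrib]
      _ = (∑ j, A j * lam j) - (∑ j, B j * Real.log (lam j)) + C := by rw [h1, h2]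
      _ = (∑ j, (A j * lam j - B j * Real.log (lam j))) + C := by rw [Finset.sum_sub_distrib]
  have hg := aux_sum_strictConvex A B hBpos C
  have hnextpos : ∀ j, 0 < lamnext j := by
    intro j
    obtain ⟨i0, t0, h0⟩ := hj j
    have hT : 0 < ∑ i, ∑ t, a i j t * m i t / ∑ l, a i l t * lamk l := by
      apply Finset.sum_pos'
      · intro i _
        exact Finset.sum_nonneg fun t _ =>
          div_nonneg (mul_nonneg (ha i j t) (hm i t).le) (hsum i t).le
      · refine ⟨i0, Finset.mem_univ _, Finset.sum_pos' ?_ ⟨t0, Finset.mem_univ _, ?_⟩⟩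
        · intro t _
          exact div_nonneg (mul_nonneg (ha i0 j t) (hm i0 t).le) (hsum i0 t).le
        · exact div_pos (mul_pos h0 (hm i0 t0)) (hsum i0 t0)
    rw [hnext]
    exact mul_pos (div_pos (hlamk j) (hden j)) hT
  have hBA : ∀ j, lamnext j = B j / A j := by
    intro j
    have hBe : B j = lamk j * ∑ i, ∑ t, a i j t * m i t / ∑ l, a i l t * lamk l := by
      rw [hB, Finset.mul_sum]
      refine Finset.sum_congr rfl fun i _ => ?_
      rw [Finset.mul_sum]
      exact Finset.sum_congr rfl fun t _ => by ring
    rw [hnext, hBe]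
    show lamk j / A j * (∑ i, ∑ t, a i j t * m i t / ∑ l, a i l t * lamk l) = _
    ring
  refine ⟨?_, ?_, hnextpos, ?_⟩
  · refine ⟨hg.1, ?_⟩
    intro x hx y hy hxy c d hc hd hcd
    have hmem : ∀ j, 0 < (c • x + d • y) j := hg.1 hx hy hc.le hd.le hcd
    rw [hEq x hx, hEq y hy, hEq _ hmem]
    exact hg.2 hx hy hxy hc hd hcd
  · intro lam hlam j
    obtain ⟨i0, t0, h0⟩ := hj j
    apply Finset.sum_pos'
    · intro i _
      exact Finset.sum_nonneg fun t _ =>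
        div_nonneg (mul_nonneg (mul_nonneg (hm i t).le (ha i j t)) (hlamk j).le)
          (mul_nonneg (pow_nonneg (hlam j).le 2) (hsum i t).le)
    · refine ⟨i0, Finset.mem_univ _, Finset.sum_pos' ?_ ⟨t0, Finset.mem_univ _, ?_⟩⟩
      · intro t _
        exact div_nonneg (mul_nonneg (mul_nonneg (hm i0 t).le (ha i0 j t)) (hlamk j).le)
          (mul_nonneg (pow_nonneg (hlam j).le 2) (hsum i0 t).le)
      · exact div_pos (mul_pos (mul_pos (hm i0 t0) h0) (hlamk j))
          (mul_pos (pow_pos (hlam j) 2) (hsum i0 t0))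
  · intro lam hlam
    rw [hEq lamnext hnextpos, hEq lam hlam]
    apply add_le_add_left
    apply Finset.sum_le_sum
    intro j _
    rw [hBA j]
    exact aux_logmin (hApos j) (hBpos j) (hlam j)
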